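/- Fix an integer N ≥ 1 and for each i ≥ 1 a homogeneous polynomial map F^i = (F^i_0,…,F^i_N) : ℂ^{N+1} → ℂ^{N+1} of degree d_i ≥ 2 whose only common zero is 0. Suppose there is c ≥ 0 with |(1/d_i) log|F^i(x)| − log|x|| ≤ c for all i ≥ 1 and all x ∈ ℂ^{N+1}∖{0} (where |x| is the Euclidean norm). Define G_0(x) = log|x|² and G_n(x) = (1/(d_1⋯d_n)) log|F^n∘⋯∘F^1(x)|². Then |G_n(x) − G_{n−1}(x)| ≤ c/2^{n−2} for all n ≥ 1 and all x ≠ 0, and consequently G_n converges uniformly on ℂ^{N+1}∖{0} to a continuous function G. -/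

import Mathlib

/-! Writing `y = F^n ∘ ⋯ ∘ F^1 (x)`, which is nonzero because each `F^i` vanishes only at `0`,
one has `G_{n+1}(x) - G_n(x) = (2 / (d_1 ⋯ d_n)) ((1/d_{n+1}) log|F^{n+1}(y)| - log|y|)`, so the
hypothesis at `y` gives `|G_{n+1} - G_n| ≤ 2c / 2^n`. The bounds are geometric and uniform in `x`,
so `G_n` is uniformly Cauchy on `ℂ^{N+1} ∖ {0}`, and the uniform limit of the continuous `G_n` is
continuous. -/

open Filter Finset

/-- `orbitFrom F k n x = F (k+n) (⋯ (F (k+1) x))`, applying `F (k+1)` first. -/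
def orbitFrom {X : Type*} (F : ℕ → X → X) (k : ℕ) : ℕ → X → X
  | 0 => fun x => x
  | n + 1 => fun x => F (k + n + 1) (orbitFrom F k n x)

/-- `prodFrom d k n = d (k+1) * ⋯ * d (k+n)`. -/
def prodFrom (d : ℕ → ℕ) (k n : ℕ) : ℕ := ∏ i ∈ Finset.range n, d (k + i + 1)

/-- `Gfun F d n x = (1/(d 1 ⋯ d n)) log ‖F^n ∘ ⋯ ∘ F^1 (x)‖²`. -/
noncomputable def Gfun {N : ℕ} (F : ℕ → EuclideanSpace ℂ (Fin (N + 1)) →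
    EuclideanSpace ℂ (Fin (N + 1))) (d : ℕ → ℕ) (n : ℕ)
    (x : EuclideanSpace ℂ (Fin (N + 1))) : ℝ :=
  (1 / (prodFrom d 0 n : ℝ)) * Real.log (‖orbitFrom F 0 n x‖ ^ 2)

theorem PiLp.continuous_of_forall_apply_eq_eval {R ι κ : Type*} [CommSemiring R]
    [TopologicalSpace R] [IsTopologicalSemiring R] {p : ENNReal}
    (f : WithLp p (ι → R) → WithLp p (κ → R)) (P : κ → MvPolynomial ι R)
    (h : ∀ x j, f x j = MvPolynomial.eval x (P j)) : Continuous f := by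
  refine continuous_induced_rng.2 (continuous_pi fun j => ?_)
  simp only [Function.comp_apply, h]
  exact (MvPolynomial.continuous_eval _).comp (PiLp.continuous_ofLp p _)

theorem exists_tendstoUniformlyOn_of_dist_le_geometric_two {α β : Type*} [PseudoMetricSpace β]
    [CompleteSpace β] [Nonempty β] {f : ℕ → α → β} {s : Set α} {C : ℝ}
    (hf : ∀ x ∈ s, ∀ n, dist (f n x) (f (n + 1) x) ≤ C / 2 / 2 ^ n) :
    ∃ g : α → β, TendstoUniformlyOn f g atTop s := by
  choose! g hg using fun x hx => cauchySeq_tendsto_of_complete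
    (cauchySeq_of_le_geometric_two (hf x hx))
  refine ⟨g, Metric.tendstoUniformlyOn_iff.2 fun ε hε => ?_⟩
  have hC : Tendsto (fun n : ℕ => C / 2 ^ n) atTop (nhds 0) :=
    tendsto_const_nhds.div_atTop (tendsto_pow_atTop_atTop_of_one_lt one_lt_two)
  filter_upwards [(tendsto_order.1 hC).2 ε hε] with n hn x hx
  rw [dist_comm]
  exact (dist_le_of_le_geometric_two_of_tendsto (hf x hx) (hg x hx) n).trans_lt hn

section Orbit

variable {X : Type*} (F : ℕ → X → X)

theorem orbitFrom_ne_zero [Zero X] (hzero : ∀ i x, F i x = 0 → x = 0) (k n : ℕ) {x : X}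
    (hx : x ≠ 0) : orbitFrom F k n x ≠ 0 := by
  induction n with
  | zero => exact hx
  | succ n ih => exact fun h => ih (hzero _ _ h)

theorem continuous_orbitFrom [TopologicalSpace X] (hF : ∀ i, Continuous (F i)) (k n : ℕ) :
    Continuous (orbitFrom F k n) := by
  induction n with
  | zero => exact continuous_id
  | succ n ih => exact (hF _).comp ih

end Orbit

theorem prodFrom_succ (d : ℕ → ℕ) (k n : ℕ) :
    prodFrom d k (n + 1) = prodFrom d k n * d (k + n + 1) :=
  prod_range_succ _ _

theorem two_pow_le_prodFrom {d : ℕ → ℕ} (hd : ∀ i, 2 ≤ d i) (k n : ℕ) :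
    2 ^ n ≤ prodFrom d k n := by
  simpa [prodFrom] using pow_card_le_prod (range n) _ 2 fun i _ => hd (k + i + 1)

section Green

variable {N : ℕ} (F : ℕ → EuclideanSpace ℂ (Fin (N + 1)) → EuclideanSpace ℂ (Fin (N + 1)))
  (d : ℕ → ℕ)

theorem Gfun_succ_sub (n : ℕ) (x : EuclideanSpace ℂ (Fin (N + 1))) :
    Gfun F d (n + 1) x - Gfun F d n x =
      2 / (prodFrom d 0 n : ℝ) * ((1 / (d (n + 1) : ℝ)) *
        Real.log ‖F (n + 1) (orbitFrom F 0 n x)‖ - Real.log ‖orbitFrom F 0 n x‖) := by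
  simp only [Gfun, prodFrom_succ, orbitFrom, zero_add, Nat.cast_mul, Real.log_pow,
    ← one_div_mul_one_div]
  ring

theorem abs_Gfun_succ_sub_le (hd : ∀ i, 2 ≤ d i) (hzero : ∀ i x, F i x = 0 → x = 0) {c : ℝ}
    (hb : ∀ i x, x ≠ 0 → |(1 / (d i : ℝ)) * Real.log ‖F i x‖ - Real.log ‖x‖| ≤ c) (n : ℕ)
    {x : EuclideanSpace ℂ (Fin (N + 1))} (hx : x ≠ 0) :
    |Gfun F d (n + 1) x - Gfun F d n x| ≤ 2 * c / 2 ^ n := by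
  have hy := hb (n + 1) _ (orbitFrom_ne_zero F hzero 0 n hx)
  have hc : 0 ≤ c := (abs_nonneg _).trans hy
  have hprod : (2 : ℝ) ^ n ≤ prodFrom d 0 n := by exact_mod_cast two_pow_le_prodFrom hd 0 n
  rw [Gfun_succ_sub, abs_mul, abs_of_nonneg (by positivity)]
  calc 2 / (prodFrom d 0 n : ℝ) * _ ≤ 2 / (prodFrom d 0 n : ℝ) * c := by gcongr
    _ ≤ 2 / 2 ^ n * c := by gcongr
    _ = 2 * c / 2 ^ n := by ring

theorem continuousOn_Gfun (hF : ∀ i, Continuous (F i)) (hzero : ∀ i x, F i x = 0 → x = 0)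
    (n : ℕ) : ContinuousOn (Gfun F d n) {x | x ≠ 0} := by
  refine continuousOn_const.mul (ContinuousOn.log ?_ fun x hx => ?_)
  · exact ((continuous_orbitFrom F hF 0 n).norm.pow 2).continuousOn
  · exact pow_ne_zero 2 (norm_ne_zero_iff.2 (orbitFrom_ne_zero F hzero 0 n hx))

end Green

theorem stmt15_general (N : ℕ)
    (F : ℕ → EuclideanSpace ℂ (Fin (N + 1)) → EuclideanSpace ℂ (Fin (N + 1)))
    (d : ℕ → ℕ) (hd : ∀ i, 2 ≤ d i)
    -- each F i is a homogeneous polynomial map of degree d i: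
    (hpoly : ∀ i, ∃ P : Fin (N + 1) → MvPolynomial (Fin (N + 1)) ℂ,
      (∀ j, (P j).IsHomogeneous (d i)) ∧ ∀ x j, F i x j = MvPolynomial.eval x (P j))
    -- whose only common zero is 0:
    (hzero : ∀ i x, F i x = 0 → x = 0)
    (c : ℝ)
    (hb : ∀ i x, x ≠ 0 → |(1 / (d i : ℝ)) * Real.log ‖F i x‖ - Real.log ‖x‖| ≤ c) :
    (∀ n, 1 ≤ n → ∀ x, x ≠ 0 →
      |Gfun F d n x - Gfun F d (n - 1) x| ≤ c / (2 : ℝ) ^ ((n : ℝ) - 2)) ∧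
    ∃ G : EuclideanSpace ℂ (Fin (N + 1)) → ℝ,
      ContinuousOn G {x | x ≠ 0} ∧
      TendstoUniformlyOn (fun n x => Gfun F d n x) G atTop {x | x ≠ 0} := by
  have hstep := abs_Gfun_succ_sub_le F d hd hzero hb
  refine ⟨fun n hn x hx => ?_, ?_⟩
  · obtain ⟨m, rfl⟩ := Nat.exists_eq_add_of_le' hn
    have hpow : (2 : ℝ) ^ ((↑(m + 1) : ℝ) - 2) = 2 ^ m / 2 := by
      rw [Nat.cast_succ, add_sub_assoc, Real.rpow_add two_pos, Real.rpow_natCast]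
      norm_num [div_eq_mul_inv]
    rw [Nat.add_sub_cancel, hpow, div_div_eq_mul_div, mul_comm]
    exact hstep m hx
  · have hF i : Continuous (F i) :=
      let ⟨P, _, hP⟩ := hpoly i
      PiLp.continuous_of_forall_apply_eq_eval (F i) P hP
    obtain ⟨G, hG⟩ := exists_tendstoUniformlyOn_of_dist_le_geometric_two
      (f := fun n x => Gfun F d n x) (s := {x | x ≠ 0}) (C := 4 * c) fun x hx n => by
        rw [dist_comm, Real.dist_eq]
        exact (hstep n hx).trans_eq (by ring)
    exact ⟨G, hG.continuousOn (.of_forall (continuousOn_Gfun F d hF hzero)), hG⟩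

theorem stmt15 (N : ℕ)
    (F : ℕ → EuclideanSpace ℂ (Fin (N + 1)) → EuclideanSpace ℂ (Fin (N + 1)))
    (d : ℕ → ℕ) (hd : ∀ i, 2 ≤ d i)
    -- each F i is a homogeneous polynomial map of degree d i:
    (hpoly : ∀ i, ∃ P : Fin (N + 1) → MvPolynomial (Fin (N + 1)) ℂ,
      (∀ j, (P j).IsHomogeneous (d i)) ∧ ∀ x j, F i x j = MvPolynomial.eval x (P j))
    -- whose only common zero is 0:
    (hzero : ∀ i x, F i x = 0 → x = 0)
    (c : ℝ) (hc : 0 ≤ c)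
    (hb : ∀ i x, x ≠ 0 → |(1 / (d i : ℝ)) * Real.log ‖F i x‖ - Real.log ‖x‖| ≤ c) :
    (∀ n, 1 ≤ n → ∀ x, x ≠ 0 →
      |Gfun F d n x - Gfun F d (n - 1) x| ≤ c / (2 : ℝ) ^ ((n : ℝ) - 2)) ∧
    ∃ G : EuclideanSpace ℂ (Fin (N + 1)) → ℝ,
      ContinuousOn G {x | x ≠ 0} ∧
      TendstoUniformlyOn (fun n x => Gfun F d n x) G atTop {x | x ≠ 0} :=
  stmt15_general N F d hd hpoly hzero c hb
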